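/- For an endomorphism X of a finite-dimensional real vector space, each of the elliptic, hyperbolic, and nilpotent components of the refined additive Jordan decomposition X = E + H + N is a real polynomial in X. -/

import Mathlib

open TensorProduct

/-- An endomorphism of a vector space over `K` is diagonalizable if its eigenspaces span. -/
def IsDiag {K M : Type*} [Field K] [AddCommGroup M] [Module K M]
    (f : Module.End K M) : Prop :=
  (⨆ μ : K, f.eigenspace μ) = ⊤

/-- The complexification of a real endomorphism, acting on `ℂ ⊗[ℝ] V`. -/
noncomputable def cplx {V : Type*} [AddCommGroup V] [Module ℝ V]
    (X : Module.End ℝ V) : Module.End ℂ (ℂ ⊗[ℝ] V) :=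
  LinearMap.baseChange ℂ X

/-- `X` is (additively) elliptic: semisimple with purely imaginary eigenvalues. -/
noncomputable def IsElliptic {V : Type*} [AddCommGroup V] [Module ℝ V]
    (X : Module.End ℝ V) : Prop :=
  IsDiag (cplx X) ∧ ∀ μ : ℂ, (cplx X).HasEigenvalue μ → μ.re = 0

/-- `X` is (additively) hyperbolic: semisimple with real eigenvalues. -/
noncomputable def IsHyperbolic {V : Type*} [AddCommGroup V] [Module ℝ V]
    (X : Module.End ℝ V) : Prop :=
  IsDiag (cplx X) ∧ ∀ μ : ℂ, (cplx X).HasEigenvalue μ → μ.im = 0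

/-- `g` is (multiplicatively) elliptic: semisimple with eigenvalues of absolute value one. -/
noncomputable def IsMultElliptic {V : Type*} [AddCommGroup V] [Module ℝ V]
    (g : Module.End ℝ V) : Prop :=
  IsDiag (cplx g) ∧ ∀ μ : ℂ, (cplx g).HasEigenvalue μ → ‖μ‖ = 1

/-- `g` is (multiplicatively) hyperbolic: semisimple with positive real eigenvalues. -/
noncomputable def IsMultHyperbolic {V : Type*} [AddCommGroup V] [Module ℝ V]
    (g : Module.End ℝ V) : Prop :=
  IsDiag (cplx g) ∧ ∀ μ : ℂ, (cplx g).HasEigenvalue μ → μ.im = 0 ∧ 0 < μ.re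

/-!
Write `S = E + H`. Its complexification is semisimple and `S` commutes with the nilpotent `N`, so
by uniqueness of the Jordan–Chevalley decomposition (applied after complexifying) `S` and `N` are
the semisimple and nilpotent parts of `X`, hence polynomials in `X`. On a joint eigenspace of the
complexified `E` and `H`, with eigenvalues `a ∈ iℝ` and `b ∈ ℝ`, the map `S` acts by `a + b` and
`H` by `b = Re (a + b)`; so `H = q(S)` for any real polynomial `q` with `q(λ) = Re λ` on the
spectrum of `S`. Finally `E = S - H`.
-/

open Polynomial Module.End

section Diagonalizable

variable {K M : Type*} [Field K] [AddCommGroup M] [Module K M] [FiniteDimensional K M]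
  {f g : Module.End K M}

theorem IsDiag.isSemisimple (hf : IsDiag f) : f.IsSemisimple := by
  classical
  let P : K[X] := ∏ μ ∈ (minpoly K f).roots.toFinset, (X - C μ)
  refine isSemisimple_of_squarefree_aeval_eq_zero (p := P)
    (separable_prod_X_sub_C_iff'.mpr fun _ _ _ _ h ↦ h).squarefree ?_
  rw [← LinearMap.ker_eq_top, eq_top_iff, ← hf]
  refine iSup_le fun μ v hv ↦ ?_
  rcases eq_or_ne v 0 with rfl | hv0
  · exact Submodule.zero_mem _
  have hev : f.HasEigenvector μ v := ⟨hv, hv0⟩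
  have hroot : μ ∈ (minpoly K f).roots.toFinset := by
    simpa [mem_roots (minpoly.ne_zero_of_finite K f)] using
      isRoot_of_hasEigenvalue (hasEigenvalue_of_hasEigenvector hev)
  rw [LinearMap.mem_ker, aeval_apply_of_hasEigenvector hev, eval_prod,
    Finset.prod_eq_zero hroot (by simp), zero_smul]

theorem IsDiag.iSup_iSup_eigenspace_inf_eigenspace_eq_top (hf : IsDiag f) (hg : IsDiag g)
    (hfg : Commute f g) : ⨆ (a : K) (b : K), f.eigenspace a ⊓ g.eigenspace b = ⊤ := by
  have hfg' : Pairwise fun i j ↦ Commute (![f, g] i) (![f, g] j) := by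
    intro i j _
    fin_cases i <;> fin_cases j <;> simp [hfg, hfg.symm]
  have hfs := hf.isSemisimple.isFinitelySemisimple
  have hgs := hg.isSemisimple.isFinitelySemisimple
  have hgen : ∀ i, ⨆ μ, (![f, g] i).maxGenEigenspace μ = ⊤ := by
    intro i
    fin_cases i
    · simpa [hfs.maxGenEigenspace_eq_eigenspace] using show ⨆ μ, f.eigenspace μ = ⊤ from hf
    · simpa [hgs.maxGenEigenspace_eq_eigenspace] using show ⨆ μ, g.eigenspace μ = ⊤ from hg
  rw [eq_top_iff, ← iSup_iInf_maxGenEigenspace_eq_top_of_iSup_maxGenEigenspace_eq_top_of_commute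
    _ hfg' hgen]
  refine iSup_le fun χ ↦ le_iSup₂_of_le (χ 0) (χ 1) (le_inf ?_ ?_)
  · simpa [hfs.maxGenEigenspace_eq_eigenspace] using
      iInf_le (fun i ↦ (![f, g] i).maxGenEigenspace (χ i)) 0
  · simpa [hgs.maxGenEigenspace_eq_eigenspace] using
      iInf_le (fun i ↦ (![f, g] i).maxGenEigenspace (χ i)) 1

end Diagonalizable

theorem Complex.exists_aeval_eq_re (σ : Finset ℂ) :
    ∃ q : ℝ[X], ∀ μ ∈ σ, aeval μ q = μ.re := by
  classical
  set τ := σ ∪ σ.image (starRingEnd ℂ)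
  set P := Lagrange.interpolate τ id (fun μ ↦ (μ.re : ℂ))
  have hP : ∀ μ ∈ τ, P.eval μ = μ.re := fun μ hμ ↦
    Lagrange.eval_interpolate_at_node _ (Set.injOn_id _) hμ
  have hconj : ∀ μ, (P.map (starRingEnd ℂ)).eval μ = starRingEnd ℂ (P.eval (starRingEnd ℂ μ)) := by
    intro μ
    rw [eval_map, ← eval₂_id, hom_eval₂, Complex.conj_conj]
    rfl
  -- `τ` is closed under conjugation, so the real part `(P + P̄) / 2` still interpolates `re` on `σ`.
  obtain ⟨q, hq⟩ : C 2⁻¹ * (P + P.map (starRingEnd ℂ)) ∈ lifts (algebraMap ℝ ℂ) :=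
    (lifts_iff_coeff_lifts _).mpr fun n ↦ ⟨(P.coeff n).re, by
      simp [coeff_C_mul, Complex.add_conj]⟩
  refine ⟨q, fun μ hμ ↦ ?_⟩
  have hμ' : starRingEnd ℂ μ ∈ τ := Finset.mem_union_right _ (Finset.mem_image_of_mem _ hμ)
  rw [← eval_map_algebraMap, ← coe_mapRingHom, hq, eval_mul, eval_C, eval_add, hconj,
    hP μ (Finset.mem_union_left _ hμ), hP _ hμ']
  simp only [Complex.conj_re, Complex.conj_ofReal]
  ring

section Complexification

variable {V : Type*} [AddCommGroup V] [Module ℝ V] {f g : Module.End ℝ V}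

theorem cplx_injective : Function.Injective (cplx : Module.End ℝ V → _) :=
  LinearMap.baseChangeHom_injective ℝ V ℂ

theorem cplx_add (f g : Module.End ℝ V) : cplx (f + g) = cplx f + cplx g :=
  LinearMap.baseChange_add f g

theorem cplx_aeval (f : Module.End ℝ V) (p : ℝ[X]) : cplx (aeval f p) = aeval (cplx f) p :=
  (aeval_algHom_apply (baseChangeHom ℝ ℂ V) f p).symm

theorem Commute.cplx (h : Commute f g) : Commute (cplx f) (cplx g) :=
  h.map (baseChangeHom ℝ ℂ V)

theorem IsNilpotent.cplx (h : IsNilpotent f) : IsNilpotent (cplx f) :=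
  h.map (baseChangeHom ℝ ℂ V)

theorem Module.End.IsSemisimple.cplx [FiniteDimensional ℝ V] (h : f.IsSemisimple) :
    (cplx f).IsSemisimple := by
  refine isSemisimple_of_squarefree_aeval_eq_zero
    ((PerfectField.separable_iff_squarefree.mpr h.minpoly_squarefree).map
      (f := algebraMap ℝ ℂ)).squarefree ?_
  rw [aeval_map_algebraMap, ← cplx_aeval, minpoly.aeval]
  exact map_zero (baseChangeHom ℝ ℂ V)

end Complexification

section

variable {V : Type*} [AddCommGroup V] [Module ℝ V] [FiniteDimensional ℝ V]

theorem exists_aeval_add_eq_of_isSemisimple_cplx {S N : Module.End ℝ V}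
    (hS : (cplx S).IsSemisimple) (hN : IsNilpotent N) (hSN : Commute S N) :
    ∃ p : ℝ[X], aeval (S + N) p = S := by
  obtain ⟨n, hn, s, hs, hn_nil, hs_ss, hsum⟩ := (S + N).exists_isNilpotent_isSemisimple
  have hns : Commute n s := Algebra.commute_of_mem_adjoin_singleton_of_commute hs
    (Algebra.commute_of_mem_adjoin_self hn).symm
  have hcplx : cplx N + cplx S = cplx n + cplx s := by
    rw [← cplx_add, ← cplx_add, ← hsum, add_comm]
  obtain ⟨-, hSs⟩ := isNilpotent_isSemisimple_unique hN.cplx hS hn_nil.cplx hs_ss.cplx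
    hSN.symm.cplx hns.cplx hcplx
  rw [Algebra.adjoin_singleton_eq_range_aeval] at hs
  obtain ⟨p, rfl⟩ := hs
  exact ⟨p, cplx_injective hSs.symm⟩

theorem IsHyperbolic.exists_aeval_add_eq {E H : Module.End ℝ V} (hE : IsElliptic E)
    (hH : IsHyperbolic H) (hEH : Commute E H) : ∃ q : ℝ[X], aeval (E + H) q = H := by
  obtain ⟨q, hq⟩ := Complex.exists_aeval_eq_re (minpoly ℂ (cplx (E + H))).roots.toFinset
  refine ⟨q, cplx_injective ?_⟩
  rw [cplx_aeval, ← LinearMap.eqLocus_eq_top, eq_top_iff,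
    ← hE.1.iSup_iSup_eigenspace_inf_eigenspace_eq_top hH.1 hEH.cplx]
  refine iSup₂_le fun a b v ⟨hva, hvb⟩ ↦ ?_
  rcases eq_or_ne v 0 with rfl | hv0
  · exact Submodule.zero_mem _
  have hvS : (cplx (E + H)).HasEigenvector (a + b) v := by
    refine ⟨mem_eigenspace_iff.mpr ?_, hv0⟩
    rw [cplx_add, LinearMap.add_apply, mem_eigenspace_iff.mp hva, mem_eigenspace_iff.mp hvb,
      add_smul]
  have hroot : a + b ∈ (minpoly ℂ (cplx (E + H))).roots.toFinset := by
    simpa [mem_roots (minpoly.ne_zero_of_finite ℂ _)] using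
      isRoot_of_hasEigenvalue (hasEigenvalue_of_hasEigenvector hvS)
  have hre : (((a + b).re : ℝ) : ℂ) = b := by
    have ha := hE.2 a (hasEigenvalue_of_hasEigenvector ⟨hva, hv0⟩)
    have hb := hH.2 b (hasEigenvalue_of_hasEigenvector ⟨hvb, hv0⟩)
    apply Complex.ext <;> simp [ha, hb]
  change aeval (cplx (E + H)) q v = cplx H v
  rw [← aeval_map_algebraMap ℂ, aeval_apply_of_hasEigenvector hvS, eval_map_algebraMap,
    hq _ hroot, hre, mem_eigenspace_iff.mp hvb]

end

theorem additive_jordan_components_are_polynomials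
    {V : Type*} [AddCommGroup V] [Module ℝ V] [FiniteDimensional ℝ V]
    (X E H N : Module.End ℝ V)
    (hEH : Commute E H) (hEN : Commute E N) (hHN : Commute H N)
    (hE : IsElliptic E) (hH : IsHyperbolic H) (hN : IsNilpotent N)
    (hX : X = E + H + N) :
    ∃ p q r : Polynomial ℝ,
      E = Polynomial.aeval X p ∧ H = Polynomial.aeval X q ∧ N = Polynomial.aeval X r := by
  have hS : (cplx (E + H)).IsSemisimple := by
    rw [cplx_add]
    exact hE.1.isSemisimple.add_of_commute hEH.cplx hH.1.isSemisimple
  obtain ⟨s, hs⟩ := exists_aeval_add_eq_of_isSemisimple_cplx hS hN (hEN.add_left hHN)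
  obtain ⟨q, hq⟩ := hH.exists_aeval_add_eq hE hEH
  subst hX
  refine ⟨s - q.comp s, q.comp s, X - s, ?_, ?_, ?_⟩ <;>
    simp only [map_sub, aeval_comp, aeval_X, hs, hq] <;> abel
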